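/- Define μ_i ∈ 𝒟'(𝕋) for 1 ≤ i ≤ 2m−1 by μ̂_i(k) = conj(μ̂_i(−k)) = conj(λ)^k ∑_{l=0}^{i-1} (−1)^{i-1-l} C(i−1,l) C(l, m−1) C(l+k, m−1) for k ≥ 0, where λ ∈ 𝕋 and m ≥ 1. Then μ_i = 0 for 1 ≤ i ≤ m−1, the Fourier coefficients of μ_i for m ≤ i ≤ 2m−2 satisfy μ̂_i(k) = C(i−1, m−1) · (∏_{j=i+1−m}^{m−1} (k+j)) / (2m−1−i)! · conj(λ)^k, and μ̂_{2m−1}(k) = C(2m−2, m−1) conj(λ)^k for all k ≥ 0. -/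

import Mathlib

/-!
Write `r = m - 1` and `N = i - 1`. The identity `C(N, l) C(l, r) = C(N, r) C(N - r, l - r)` turns
the sum defining `μ̂_i(k)` into `C(N, r)` times the `(N - r)`-th forward difference of
`x ↦ C(x, r)` at `x = r + k`, and since `Δ C(x, j + 1) = C(x, j)` this difference is
`C(r + k, 2r - N)`. For `N < r` the factor `C(N, r)` vanishes; for `r ≤ N ≤ 2r` the falling
factorial `(2r - N)! C(r + k, 2r - N)` is the product `∏_{j = N - r + 1}^{r} (k + j)`.
-/

open Complex Finset

/-- Fourier coefficient `μ̂_i(k)` of the distribution `μ_i` from (eq:H(b)=Dvecmu) with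
`p = 1` (i.e. `c_0 = 1`, higher coefficients zero). -/
noncomputable def muHat (m : ℕ) (lam : ℂ) (i k : ℕ) : ℂ :=
  (starRingEnd ℂ lam) ^ k *
    ∑ l ∈ Finset.range i,
      (-1 : ℂ) ^ (i - 1 - l) * (Nat.choose (i - 1) l : ℂ) *
        (Nat.choose l (m - 1) : ℂ) * (Nat.choose (l + k) (m - 1) : ℂ)

open scoped Nat

lemma sum_alternating_choose_mul_choose_add {n r : ℕ} (hnr : n ≤ r) (a : ℕ) :
    ∑ t ∈ range (n + 1), (-1 : ℤ) ^ (n - t) * n.choose t * (a + t).choose r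
      = a.choose (r - n) := by
  obtain ⟨j, rfl⟩ := Nat.exists_eq_add_of_le hnr
  have h := fwdDiff_iter_eq_sum_shift 1 (fun x ↦ x.choose (n + j) : ℕ → ℤ) n a
  rw [fwdDiff_iter_choose] at h
  simpa [Nat.add_sub_cancel_left] using h.symm

lemma sum_alternating_choose_mul_choose_mul_choose {N r : ℕ} (hN : N ≤ 2 * r) (k : ℕ) :
    ∑ l ∈ range (N + 1), (-1 : ℤ) ^ (N - l) * N.choose l * l.choose r * (l + k).choose r
      = N.choose r * (r + k).choose (2 * r - N) := by
  rcases lt_or_ge N r with hNr | hrN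
  · rw [Nat.choose_eq_zero_of_lt hNr, Nat.cast_zero, zero_mul]
    refine sum_eq_zero fun l hl ↦ ?_
    rw [Nat.choose_eq_zero_of_lt (n := l) (k := r) (by simp at hl; omega)]
    simp
  obtain ⟨n, rfl⟩ := Nat.exists_eq_add_of_le hrN
  have hvanish : ∑ l ∈ range r,
      (-1 : ℤ) ^ (r + n - l) * (r + n).choose l * l.choose r * (l + k).choose r = 0 :=
    sum_eq_zero fun l hl ↦ by rw [Nat.choose_eq_zero_of_lt (mem_range.1 hl)]; simp
  have hterm : ∀ t ∈ range (n + 1),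
      (-1 : ℤ) ^ (r + n - (r + t)) * (r + n).choose (r + t) * (r + t).choose r
          * (r + t + k).choose r
        = (r + n).choose r * ((-1) ^ (n - t) * n.choose t * (r + k + t).choose r) := by
    intro t _
    have hchoose := Nat.choose_mul (n := r + n) (k := r + t) (s := r) (Nat.le_add_right r t)
    simp only [Nat.add_sub_cancel_left] at hchoose
    replace hchoose := congrArg (Nat.cast : ℕ → ℤ) hchoose
    push_cast at hchoose
    rw [Nat.add_sub_add_left, show r + k + t = r + t + k by omega]
    linear_combination ((-1 : ℤ) ^ (n - t) * (r + t + k).choose r) * hchoose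
  rw [add_assoc, sum_range_add, hvanish, zero_add, sum_congr rfl hterm, ← mul_sum,
    sum_alternating_choose_mul_choose_add (by omega), show r - n = 2 * r - (r + n) by omega]

lemma muHat_eq_choose_mul_choose (m : ℕ) (lam : ℂ) {i : ℕ} (hi : 1 ≤ i) (him : i ≤ 2 * m - 1)
    (k : ℕ) :
    muHat m lam i k
      = (i - 1).choose (m - 1) * (m - 1 + k).choose (2 * m - 1 - i) * (starRingEnd ℂ lam) ^ k := by
  obtain ⟨N, rfl⟩ := Nat.exists_eq_add_of_le' hi
  have h := congrArg (Int.cast : ℤ → ℂ)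
    (sum_alternating_choose_mul_choose_mul_choose (N := N) (r := m - 1) (by omega) k)
  push_cast at h
  rw [muHat, Nat.add_sub_cancel, h, show 2 * (m - 1) - N = 2 * m - 1 - (N + 1) by omega]
  ring

lemma prod_Icc_add_eq_factorial_mul_choose {n r : ℕ} (hnr : n ≤ r) (k : ℕ) :
    ∏ j ∈ Icc (n + 1) r, (k + j) = (r - n)! * (r + k).choose (r - n) := by
  rw [← Ico_add_one_right_eq_Icc, prod_Ico_eq_prod_range, show r + 1 - (n + 1) = r - n by omega,
    show r + k = k + n + (r - n) by omega, ← Nat.ascFactorial_eq_factorial_mul_choose,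
    Nat.ascFactorial_eq_prod_range]
  exact prod_congr rfl fun t _ ↦ by omega

theorem stmt18_general (m : ℕ) (hm : 1 ≤ m) (lam : ℂ) :
    -- `μ_i = 0` for `1 ≤ i ≤ m−1`
    (∀ i : ℕ, 1 ≤ i → i ≤ m - 1 → ∀ k : ℕ, muHat m lam i k = 0) ∧
    -- for `m ≤ i ≤ 2m−2`
    (∀ i : ℕ, m ≤ i → i ≤ 2 * m - 2 → ∀ k : ℕ,
      muHat m lam i k
        = (Nat.choose (i - 1) (m - 1) : ℂ) *
            (∏ j ∈ Finset.Icc (i + 1 - m) (m - 1), ((k : ℂ) + (j : ℂ))) /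
            (Nat.factorial (2 * m - 1 - i) : ℂ) * (starRingEnd ℂ lam) ^ k) ∧
    -- `μ_{2m−1} = C(2m−2, m−1) δ_λ`
    (∀ k : ℕ, muHat m lam (2 * m - 1) k
      = (Nat.choose (2 * m - 2) (m - 1) : ℂ) * (starRingEnd ℂ lam) ^ k) := by
  refine ⟨fun i hi him k ↦ ?_, fun i hmi him k ↦ ?_, fun k ↦ ?_⟩
  · rw [muHat_eq_choose_mul_choose m lam hi (by omega), Nat.choose_eq_zero_of_lt (by omega)]
    simp
  · have hprod := prod_Icc_add_eq_factorial_mul_choose (n := i - m) (r := m - 1) (by omega) k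
    rw [show i - m + 1 = i + 1 - m by omega, show m - 1 - (i - m) = 2 * m - 1 - i by omega] at hprod
    have hfac : ((2 * m - 1 - i)! : ℂ) ≠ 0 := by exact_mod_cast Nat.factorial_ne_zero _
    have hprodC := congrArg (Nat.cast : ℕ → ℂ) hprod
    push_cast at hprodC
    rw [muHat_eq_choose_mul_choose m lam (by omega) (by omega), hprodC]
    field_simp
  · rw [muHat_eq_choose_mul_choose m lam (by omega) le_rfl, show 2 * m - 1 - 1 = 2 * m - 2 by omega]
    simp

theorem stmt18 (m : ℕ) (hm : 1 ≤ m) (lam : ℂ) (hlam : ‖lam‖ = 1) :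
    -- `μ_i = 0` for `1 ≤ i ≤ m−1`
    (∀ i : ℕ, 1 ≤ i → i ≤ m - 1 → ∀ k : ℕ, muHat m lam i k = 0) ∧
    -- for `m ≤ i ≤ 2m−2`
    (∀ i : ℕ, m ≤ i → i ≤ 2 * m - 2 → ∀ k : ℕ,
      muHat m lam i k
        = (Nat.choose (i - 1) (m - 1) : ℂ) *
            (∏ j ∈ Finset.Icc (i + 1 - m) (m - 1), ((k : ℂ) + (j : ℂ))) /
            (Nat.factorial (2 * m - 1 - i) : ℂ) * (starRingEnd ℂ lam) ^ k) ∧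
    -- `μ_{2m−1} = C(2m−2, m−1) δ_λ`
    (∀ k : ℕ, muHat m lam (2 * m - 1) k
      = (Nat.choose (2 * m - 2) (m - 1) : ℂ) * (starRingEnd ℂ lam) ^ k) :=
  stmt18_general m hm lam
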